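/- Every compactly generated closed ordered space (compactly generated closed preordered with ≤ antisymmetric) whose topology is locally compact and σ-compact is convex and normally ordered. -/

import Mathlib

/-!
Fix a compact exhaustion `K 0 ⊆ int K 1 ⊆ K 1 ⊆ ⋯` of `E`. Both properties come from building open
sets `U n, V n ⊆ K n` step by step: `U (n + 1)` is an open neighbourhood of the compact set
`d(closure (U n) ∪ A) ∩ K (n + 1)`, cut down to `int K (n + 1)`, and `V (n + 1)` is built dually
from `i(closure (V n) ∪ B)`. Because `≤` is closed these hulls are compact, so by regularity the
neighbourhoods can be chosen to keep the closures of the two sides separated; the unions `⋃ U n`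
and `⋃ V n` are then open, decreasing and increasing.

For normality "separated" means that no point of `closure V ∪ B` lies below a point of
`closure U ∪ A`. For convexity at `x ∈ O` (with `A = B = {x}`) it means that every order interval
`[q, p]` from `closure V ∪ {x}` to `closure U ∪ {x}` lies in `O` and in some `K J`. This bound
survives passing to neighbourhoods only thanks to compact generation: once `R(K m) ⊆ int K (m + 1)`,
a chain starting in `int K m` and ending outside `K (m + 1)` must pass through the compact annulus
`K (m + 1) \ int K m`.
-/

open Topology

/-- The increasing hull `i(S) = {y | ∃ x ∈ S, x ≤ y}`. -/
def incHull {E : Type*} [Preorder E] (S : Set E) : Set E := {y | ∃ x ∈ S, x ≤ y}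

/-- The decreasing hull `d(S) = {y | ∃ x ∈ S, y ≤ x}`. -/
def decHull {E : Type*} [Preorder E] (S : Set E) : Set E := {y | ∃ x ∈ S, y ≤ x}

/-- The image `R(K) = {y | ∃ x ∈ K, (x,y) ∈ R}` of a set under a relation. -/
def relImage {E : Type*} (R : Set (E × E)) (K : Set E) : Set E :=
  {y | ∃ x ∈ K, (x, y) ∈ R}

open Set

theorem exists_seq_of_forall_exists {α : Type*} {P : ℕ → α → Prop} {r : ℕ → α → α → Prop}
    {a : α} (ha : P 0 a) (h : ∀ n a, P n a → ∃ b, P (n + 1) b ∧ r n a b) :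
    ∃ f : ℕ → α, f 0 = a ∧ ∀ n, P n (f n) ∧ r n (f n) (f (n + 1)) := by
  choose g hg using h
  let f : (n : ℕ) → {b // P n b} :=
    fun n => Nat.rec ⟨a, ha⟩ (fun n b => ⟨g n b.1 b.2, (hg n b.1 b.2).1⟩) n
  exact ⟨fun n => (f n).1, rfl, fun n => ⟨(f n).2, (hg n (f n).1 (f n).2).2⟩⟩

theorem IsCompact.isClosed_setOf_exists_mem {X Y : Type*} [TopologicalSpace X]
    [TopologicalSpace Y] {K : Set X} (hK : IsCompact K) {F : Set (X × Y)} (hF : IsClosed F) :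
    IsClosed {y | ∃ x ∈ K, (x, y) ∈ F} := by
  have := isCompact_iff_compactSpace.mp hK
  convert isClosedMap_snd_of_compactSpace (X := K) _
    (hF.preimage (continuous_subtype_val.prodMap continuous_id)) using 1
  ext y
  simp

theorem exists_open_closure_prod_subset {X Y : Type*} [TopologicalSpace X] [TopologicalSpace Y]
    [RegularSpace X] [RegularSpace Y] {s : Set X} {t : Set Y} (hs : IsCompact s)
    (ht : IsCompact t) {n : Set (X × Y)} (hn : IsOpen n) (hst : s ×ˢ t ⊆ n) :
    ∃ u v, IsOpen u ∧ IsOpen v ∧ s ⊆ u ∧ t ⊆ v ∧ closure u ×ˢ closure v ⊆ n := by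
  obtain ⟨u₀, v₀, hu₀, hv₀, hsu₀, htv₀, huv₀⟩ := generalized_tube_lemma hs ht hn hst
  obtain ⟨u, hu, hsu, hcu⟩ := hs.exists_isOpen_closure_subset (hu₀.mem_nhdsSet.2 hsu₀)
  obtain ⟨v, hv, htv, hcv⟩ := ht.exists_isOpen_closure_subset (hv₀.mem_nhdsSet.2 htv₀)
  exact ⟨u, v, hu, hv, hsu, htv, (prod_mono hcu hcv).trans huv₀⟩

theorem exists_compactExhaustion_relImage_subset {E : Type*} [TopologicalSpace E]
    [WeaklyLocallyCompactSpace E] [SigmaCompactSpace E] {R : Set (E × E)}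
    (hR : ∀ K, IsCompact K → IsCompact (closure (relImage R K))) {S : Set E}
    (hS : IsCompact S) :
    ∃ K : CompactExhaustion E, S ⊆ K 0 ∧ ∀ n, relImage R (K n) ⊆ interior (K (n + 1)) := by
  set K₀ := CompactExhaustion.choice E
  obtain ⟨D, hD₀, hD⟩ := exists_seq_of_forall_exists
    (P := fun _ L => IsCompact L)
    (r := fun n L L' => L ∪ closure (relImage R L) ∪ K₀ n ⊆ interior L') hS
    fun n L hL => exists_compact_superset ((hL.union (hR L hL)).union (K₀.isCompact n))
  refine ⟨⟨D, fun n => (hD n).1, fun n => ?_, ?_⟩, hD₀.superset, fun n => ?_⟩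
  · exact subset_union_left.trans (subset_union_left.trans (hD n).2)
  · refine eq_univ_of_forall fun y => ?_
    obtain ⟨n, hn⟩ := K₀.exists_mem y
    exact mem_iUnion.2 ⟨n + 1, interior_subset ((hD n).2 (Or.inr hn))⟩
  · exact subset_closure.trans
      (subset_union_right.trans (subset_union_left.trans (hD n).2))

section ClosedPreorder

variable {E : Type*} [TopologicalSpace E] [Preorder E]

def GeneratesClosedOrder (R : Set (E × E)) : Prop :=
  ∀ T : Set (E × E), IsClosed T → (∀ a : E, (a, a) ∈ T) →
    (∀ a b c : E, (a, b) ∈ T → (b, c) ∈ T → (a, c) ∈ T) → R ⊆ T → {p : E × E | p.1 ≤ p.2} ⊆ T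

theorem decHull_iUnion_union_subset (K : CompactExhaustion E) {U : ℕ → Set E} {A : Set E}
    (hU : Monotone U) (hstep : ∀ n, decHull (U n ∪ A) ∩ interior (K (n + 1)) ⊆ U (n + 1)) :
    decHull ((⋃ n, U n) ∪ A) ⊆ ⋃ n, U n := by
  rintro z ⟨p, hp, hzp⟩
  obtain ⟨m, hm⟩ := K.exists_mem z
  have hz : ∀ N, m ≤ N → p ∈ U N ∪ A → z ∈ ⋃ n, U n := fun N hN hpN =>
    mem_iUnion.2 ⟨N + 1, hstep N ⟨⟨p, hpN, hzp⟩, K.subset_interior_succ N (K.subset hN hm)⟩⟩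
  rcases hp with hp | hp
  · obtain ⟨k, hk⟩ := mem_iUnion.1 hp
    exact hz (max k m) (le_max_right k m) (Or.inl (hU (le_max_left k m) hk))
  · exact hz m le_rfl (Or.inr hp)

theorem incHull_iUnion_union_subset (K : CompactExhaustion E) {V : ℕ → Set E} {B : Set E}
    (hV : Monotone V) (hstep : ∀ n, incHull (V n ∪ B) ∩ interior (K (n + 1)) ⊆ V (n + 1)) :
    incHull ((⋃ n, V n) ∪ B) ⊆ ⋃ n, V n :=
  decHull_iUnion_union_subset (E := Eᵒᵈ) K hV hstep

theorem exists_open_decHull_incHull_of_step (K : CompactExhaustion E) {A B O : Set E}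
    (I : Set E → Set E → Prop) (h₀ : I ∅ ∅) (hO : ∀ U V, I U V → U ∩ V ⊆ O)
    (hstep : ∀ n U V, U ⊆ K n → V ⊆ K n → I U V →
      ∃ U' V', IsOpen U' ∧ IsOpen V' ∧ U' ⊆ K (n + 1) ∧ V' ⊆ K (n + 1) ∧ I U' V' ∧
        decHull (U ∪ A) ∩ interior (K (n + 1)) ⊆ U' ∧
        incHull (V ∪ B) ∩ interior (K (n + 1)) ⊆ V') :
    ∃ U V, IsOpen U ∧ decHull U = U ∧ IsOpen V ∧ incHull V = V ∧ A ⊆ U ∧ B ⊆ V ∧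
      U ∩ V ⊆ O := by
  obtain ⟨s, -, hs⟩ := exists_seq_of_forall_exists
    (P := fun n s => IsOpen s.1 ∧ IsOpen s.2 ∧ s.1 ⊆ K n ∧ s.2 ⊆ K n ∧ I s.1 s.2)
    (r := fun n s s' => decHull (s.1 ∪ A) ∩ interior (K (n + 1)) ⊆ s'.1 ∧
      incHull (s.2 ∪ B) ∩ interior (K (n + 1)) ⊆ s'.2)
    (a := (∅, ∅)) ⟨isOpen_empty, isOpen_empty, empty_subset _, empty_subset _, h₀⟩
    fun n s ⟨_, _, hUK, hVK, hInv⟩ => by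
      obtain ⟨U', V', hU', hV', hUK', hVK', hInv', hUs, hVs⟩ := hstep n s.1 s.2 hUK hVK hInv
      exact ⟨(U', V'), ⟨hU', hV', hUK', hVK', hInv'⟩, hUs, hVs⟩
  simp only [forall_and] at hs
  obtain ⟨⟨hUo, hVo, hUK, hVK, hInv⟩, hUs, hVs⟩ := hs
  have hU : Monotone fun n => (s n).1 := monotone_nat_of_le_succ fun n z hz =>
    hUs n ⟨⟨z, Or.inl hz, le_rfl⟩, K.subset_interior_succ n (hUK n hz)⟩
  have hV : Monotone fun n => (s n).2 := monotone_nat_of_le_succ fun n z hz =>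
    hVs n ⟨⟨z, Or.inl hz, le_rfl⟩, K.subset_interior_succ n (hVK n hz)⟩
  have hUd := decHull_iUnion_union_subset K hU hUs
  have hVi := incHull_iUnion_union_subset K hV hVs
  refine ⟨⋃ n, (s n).1, ⋃ n, (s n).2, isOpen_iUnion hUo,
    Subset.antisymm (fun z ⟨p, hp, hzp⟩ => hUd ⟨p, Or.inl hp, hzp⟩) fun z hz => ⟨z, hz, le_rfl⟩,
    isOpen_iUnion hVo,
    Subset.antisymm (fun z ⟨p, hp, hpz⟩ => hVi ⟨p, Or.inl hp, hpz⟩) fun z hz => ⟨z, hz, le_rfl⟩,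
    fun a ha => hUd ⟨a, Or.inr ha, le_rfl⟩, fun b hb => hVi ⟨b, Or.inr hb, le_rfl⟩, ?_⟩
  rintro z ⟨hzU, hzV⟩
  obtain ⟨i, hi⟩ := mem_iUnion.1 hzU
  obtain ⟨j, hj⟩ := mem_iUnion.1 hzV
  exact hO _ _ (hInv (max i j)) ⟨hU (le_max_left i j) hi, hV (le_max_right i j) hj⟩

variable [OrderClosedTopology E]

theorem isClosed_decHull_of_isCompact {S : Set E} (hS : IsCompact S) : IsClosed (decHull S) :=
  hS.isClosed_setOf_exists_mem isClosed_le_prod'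

theorem isClosed_incHull_of_isCompact {S : Set E} (hS : IsCompact S) : IsClosed (incHull S) :=
  hS.isClosed_setOf_exists_mem isClosed_le_prod

theorem isClosed_setOf_Icc_inter_nonempty {Z : Set E} (hZ : IsCompact Z) :
    IsClosed {p : E × E | (Icc p.1 p.2 ∩ Z).Nonempty} := by
  convert hZ.isClosed_setOf_exists_mem (F := {q : E × E × E | q.2.1 ≤ q.1 ∧ q.1 ≤ q.2.2})
    ((isClosed_le (by fun_prop) (by fun_prop)).inter (isClosed_le (by fun_prop) (by fun_prop)))
    using 1
  ext p
  simp only [Set.Nonempty, mem_inter_iff, mem_Icc]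
  grind

theorem t2Space_of_antisymm (hanti : ∀ a b : E, a ≤ b → b ≤ a → a = b) : T2Space E := by
  rw [t2_iff_isClosed_diagonal]
  convert isClosed_le_prod.inter (isClosed_le_prod' (α := E)) using 1
  ext ⟨a, b⟩
  exact ⟨fun h => ⟨le_of_eq h, ge_of_eq h⟩, fun h => hanti a b h.1 h.2⟩

variable [T2Space E] {R : Set (E × E)}

/-- The pairs `a ≤ b` such that `[a, b]` meets the annulus whenever `a ∈ int K m` and
`b ∉ K (m + 1)` form a closed preorder containing `R`, hence contain all of `≤`. -/
theorem GeneratesClosedOrder.Icc_inter_annulus_nonempty (hgen : GeneratesClosedOrder R)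
    (hR : ∀ p ∈ R, p.1 ≤ p.2) (K : CompactExhaustion E)
    (hKR : ∀ n, relImage R (K n) ⊆ interior (K (n + 1))) {a b : E} (hab : a ≤ b) {m : ℕ}
    (ha : a ∈ interior (K m)) (hb : b ∉ K (m + 1)) :
    (Icc a b ∩ (K (m + 1) \ interior (K m))).Nonempty := by
  set Z := K (m + 1) \ interior (K m)
  let T : Set (E × E) := {p | p.1 ≤ p.2} ∩ ({p | p.1 ∉ interior (K m)} ∪
    {p | p.2 ∈ K (m + 1)} ∪ {p | (Icc p.1 p.2 ∩ Z).Nonempty})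
  have hT : IsClosed T := isClosed_le_prod.inter
    (((isOpen_interior.isClosed_compl.preimage continuous_fst).union
      ((K.isCompact _).isClosed.preimage continuous_snd)).union
      (isClosed_setOf_Icc_inter_nonempty ((K.isCompact _).diff isOpen_interior)))
  have hrefl : ∀ a, (a, a) ∈ T := fun a => ⟨le_rfl, by
    by_cases ha : a ∈ interior (K m)
    · exact Or.inl (Or.inr (K.subset_succ m (interior_subset ha)))
    · exact Or.inl (Or.inl ha)⟩
  have htrans : ∀ a b c, (a, b) ∈ T → (b, c) ∈ T → (a, c) ∈ T := by
    rintro a b c ⟨hab, (ha | hb) | ⟨z, hz, hzZ⟩⟩ ⟨hbc, hbc'⟩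
    · exact ⟨hab.trans hbc, Or.inl (Or.inl ha)⟩
    · refine ⟨hab.trans hbc, ?_⟩
      by_cases hbm : b ∈ interior (K m)
      · rcases hbc' with (hb' | hc) | ⟨z, hz, hzZ⟩
        · exact absurd hbm hb'
        · exact Or.inl (Or.inr hc)
        · exact Or.inr ⟨z, ⟨hab.trans hz.1, hz.2⟩, hzZ⟩
      · exact Or.inr ⟨b, ⟨hab, hbc⟩, hb, hbm⟩
    · exact ⟨hab.trans hbc, Or.inr ⟨z, ⟨hz.1, hz.2.trans hbc⟩, hzZ⟩⟩
  have hRT : R ⊆ T := by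
    rintro ⟨a, b⟩ hab
    refine ⟨hR _ hab, ?_⟩
    by_cases ha : a ∈ interior (K m)
    · exact Or.inl (Or.inr
        (interior_subset (s := K (m + 1)) (hKR m ⟨a, interior_subset ha, hab⟩)))
    · exact Or.inl (Or.inl ha)
  obtain ⟨-, (ha' | hb') | hZ⟩ := hgen T hT hrefl htrans hRT (show (a, b) ∈ _ from hab)
  exacts [absurd ha ha', absurd hb' hb, hZ]

variable [RegularSpace E]

theorem exists_normal_step (K : CompactExhaustion E) {A B : Set E} (hA : IsClosed A)
    (hAd : decHull A ⊆ A) (hB : IsClosed B) (hBi : incHull B ⊆ B) (n : ℕ) {U V : Set E}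
    (hUK : U ⊆ K n) (hVK : V ⊆ K n) (hUV : ∀ q ∈ closure V ∪ B, ∀ p ∈ closure U ∪ A, ¬q ≤ p) :
    ∃ U' V', IsOpen U' ∧ IsOpen V' ∧ U' ⊆ K (n + 1) ∧ V' ⊆ K (n + 1) ∧
      (∀ q ∈ closure V' ∪ B, ∀ p ∈ closure U' ∪ A, ¬q ≤ p) ∧
      decHull (U ∪ A) ∩ interior (K (n + 1)) ⊆ U' ∧
      incHull (V ∪ B) ∩ interior (K (n + 1)) ⊆ V' := by
  set L := K (n + 1)
  set A' := decHull (closure U ∪ A ∩ L) ∩ L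
  set B' := incHull (closure V ∪ B ∩ L) ∩ L
  have hA' : IsCompact A' := (K.isCompact _).inter_left (isClosed_decHull_of_isCompact
    (((K.isCompact n).closure_of_subset hUK).union ((K.isCompact _).inter_left hA)))
  have hB' : IsCompact B' := (K.isCompact _).inter_left (isClosed_incHull_of_isCompact
    (((K.isCompact n).closure_of_subset hVK).union ((K.isCompact _).inter_left hB)))
  have hB'A' : B' ×ˢ A' ⊆ {p | p.1 ≤ p.2}ᶜ := by
    rintro ⟨q, p⟩ ⟨⟨⟨b, hb, hbq⟩, -⟩, ⟨a, ha, hpa⟩, -⟩ hqp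
    exact hUV b (hb.imp_right And.left) a (ha.imp_right And.left) (hbq.trans (hqp.trans hpa))
  obtain ⟨GV, GU, hGV, hGU, hB'GV, hA'GU, hGVU⟩ :=
    exists_open_closure_prod_subset hB' hA' isClosed_le_prod.isOpen_compl hB'A'
  have hcl : ∀ G : Set E, closure (G ∩ interior L) ⊆ closure G ∩ L := fun G =>
    subset_inter (closure_mono inter_subset_left)
      (closure_minimal (inter_subset_right.trans interior_subset) (K.isCompact _).isClosed)
  refine ⟨GU ∩ interior L, GV ∩ interior L, hGU.inter isOpen_interior,
    hGV.inter isOpen_interior, inter_subset_right.trans interior_subset,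
    inter_subset_right.trans interior_subset, ?_, ?_, ?_⟩
  · rintro q (hq | hq) p (hp | hp) hqp
    · exact hGVU (mk_mem_prod (hcl GV hq).1 (hcl GU hp).1) hqp
    · -- `A` is decreasing, so `q ∈ A ∩ L ⊆ A' ⊆ GU`
      have hqA : q ∈ A' :=
        ⟨⟨q, Or.inr ⟨hAd ⟨p, hp, hqp⟩, (hcl GV hq).2⟩, le_rfl⟩, (hcl GV hq).2⟩
      exact hGVU (mk_mem_prod (hcl GV hq).1 (subset_closure (hA'GU hqA))) le_rfl
    · have hpB : p ∈ B' :=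
        ⟨⟨p, Or.inr ⟨hBi ⟨q, hq, hqp⟩, (hcl GU hp).2⟩, le_rfl⟩, (hcl GU hp).2⟩
      exact hGVU (mk_mem_prod (subset_closure (hB'GV hpB)) (hcl GU hp).1) le_rfl
    · exact hUV q (Or.inr hq) p (Or.inr hp) hqp
  · rintro z ⟨⟨p, hp | hp, hzp⟩, hz⟩
    · exact ⟨hA'GU ⟨⟨p, Or.inl (subset_closure hp), hzp⟩, interior_subset hz⟩, hz⟩
    · exact ⟨hA'GU ⟨⟨z, Or.inr ⟨hAd ⟨p, hp, hzp⟩, interior_subset hz⟩, le_rfl⟩,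
        interior_subset hz⟩, hz⟩
  · rintro z ⟨⟨p, hp | hp, hpz⟩, hz⟩
    · exact ⟨hB'GV ⟨⟨p, Or.inl (subset_closure hp), hpz⟩, interior_subset hz⟩, hz⟩
    · exact ⟨hB'GV ⟨⟨z, Or.inr ⟨hBi ⟨p, hp, hpz⟩, interior_subset hz⟩, le_rfl⟩,
        interior_subset hz⟩, hz⟩

theorem exists_open_decHull_incHull_disjoint (K : CompactExhaustion E) {A B : Set E}
    (hA : IsClosed A) (hAd : decHull A ⊆ A) (hB : IsClosed B) (hBi : incHull B ⊆ B)
    (hAB : A ∩ B = ∅) :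
    ∃ U V, IsOpen U ∧ decHull U = U ∧ IsOpen V ∧ incHull V = V ∧ A ⊆ U ∧ B ⊆ V ∧
      U ∩ V = ∅ := by
  have h₀ : ∀ q ∈ closure ∅ ∪ B, ∀ p ∈ closure ∅ ∪ A, ¬q ≤ p := by
    rintro q hq p hp hqp
    rw [closure_empty, empty_union] at hq hp
    exact (eq_empty_iff_forall_notMem.1 hAB) q ⟨hAd ⟨p, hp, hqp⟩, hq⟩
  simpa only [subset_empty_iff] using exists_open_decHull_incHull_of_step K (O := ∅)
    (fun U V => ∀ q ∈ closure V ∪ B, ∀ p ∈ closure U ∪ A, ¬q ≤ p) h₀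
    (fun U V hUV z hz => hUV z (Or.inl (subset_closure hz.2)) z (Or.inl (subset_closure hz.1))
      le_rfl)
    fun n U V hUK hVK hUV => exists_normal_step K hA hAd hB hBi n hUK hVK hUV

theorem GeneratesClosedOrder.exists_open_Icc_subset
    (hgen : GeneratesClosedOrder R) (hR : ∀ p ∈ R, p.1 ≤ p.2) (K : CompactExhaustion E)
    (hKR : ∀ n, relImage R (K n) ⊆ interior (K (n + 1))) {O : Set E} (hO : IsOpen O)
    {S T : Set E} (hS : IsCompact S) (hT : IsCompact T) {J : ℕ}
    (hTS : ∀ q ∈ T, ∀ p ∈ S, Icc q p ⊆ K J ∩ O) :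
    ∃ GU GV, IsOpen GU ∧ IsOpen GV ∧ S ⊆ GU ∧ T ⊆ GV ∧
      ∃ J', ∀ q ∈ closure GV, ∀ p ∈ closure GU, Icc q p ⊆ K J' ∩ O := by
  obtain ⟨M, hM⟩ := K.exists_superset_of_isCompact hT
  set m := max M J + 1
  set Z := K (m + 1) \ (interior (K m) ∩ O)
  have hTS' : T ×ˢ S ⊆ {p | p.1 ∈ interior (K m)} ∩ {p | (Icc p.1 p.2 ∩ Z).Nonempty}ᶜ := by
    rintro ⟨q, p⟩ ⟨hq, hp⟩
    refine ⟨K.subset_interior (by omega) (hM hq), fun ⟨w, hw, hwZ⟩ => hwZ.2 ?_⟩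
    exact ⟨K.subset_interior (by omega) (hTS q hq p hp hw).1, (hTS q hq p hp hw).2⟩
  obtain ⟨GV, GU, hGV, hGU, hTGV, hSGU, hGVU⟩ := exists_open_closure_prod_subset hT hS
    ((isOpen_interior.preimage continuous_fst).inter
      (isClosed_setOf_Icc_inter_nonempty
        ((K.isCompact _).diff (isOpen_interior.inter hO))).isOpen_compl) hTS'
  refine ⟨GU, GV, hGU, hGV, hSGU, hTGV, m + 1, fun q hq p hp w hw => ?_⟩
  obtain ⟨hqm, hqpZ⟩ := hGVU (mk_mem_prod hq hp)
  -- a chain from `q` leaving `K (m + 1)` would meet `Z` in the annulus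
  have hwK : w ∈ K (m + 1) := by
    by_contra hwK
    obtain ⟨z, hz, hzK, hzm⟩ := hgen.Icc_inter_annulus_nonempty hR K hKR hw.1 hqm hwK
    exact hqpZ ⟨z, ⟨hz.1, hz.2.trans hw.2⟩, hzK, fun h => hzm h.1⟩
  by_contra hwO
  exact hqpZ ⟨w, hw, hwK, fun h => hwO ⟨hwK, h.2⟩⟩

theorem GeneratesClosedOrder.exists_convex_step
    (hgen : GeneratesClosedOrder R) (hR : ∀ p ∈ R, p.1 ≤ p.2) (K : CompactExhaustion E)
    (hKR : ∀ n, relImage R (K n) ⊆ interior (K (n + 1))) {O : Set E} (hO : IsOpen O) {x : E}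
    (hx : x ∈ K 0) (n : ℕ) {U V : Set E} (hUK : U ⊆ K n) (hVK : V ⊆ K n)
    (hUV : ∃ J, ∀ q ∈ closure V ∪ {x}, ∀ p ∈ closure U ∪ {x}, Icc q p ⊆ K J ∩ O) :
    ∃ U' V', IsOpen U' ∧ IsOpen V' ∧ U' ⊆ K (n + 1) ∧ V' ⊆ K (n + 1) ∧
      (∃ J, ∀ q ∈ closure V' ∪ {x}, ∀ p ∈ closure U' ∪ {x}, Icc q p ⊆ K J ∩ O) ∧
      decHull (U ∪ {x}) ∩ interior (K (n + 1)) ⊆ U' ∧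
      incHull (V ∪ {x}) ∩ interior (K (n + 1)) ⊆ V' := by
  obtain ⟨J, hJ⟩ := hUV
  set L := K (n + 1)
  have hxL : x ∈ L := K.subset (Nat.zero_le _) hx
  set A' := decHull (closure U ∪ {x}) ∩ L
  set B' := incHull (closure V ∪ {x}) ∩ L
  have hA' : IsCompact A' := (K.isCompact _).inter_left (isClosed_decHull_of_isCompact
    (((K.isCompact n).closure_of_subset hUK).union isCompact_singleton))
  have hB' : IsCompact B' := (K.isCompact _).inter_left (isClosed_incHull_of_isCompact
    (((K.isCompact n).closure_of_subset hVK).union isCompact_singleton))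
  have hB'A' : ∀ q ∈ B', ∀ p ∈ A', Icc q p ⊆ K J ∩ O :=
    fun q ⟨⟨b, hb, hbq⟩, _⟩ p ⟨⟨a, ha, hpa⟩, _⟩ => (Icc_subset_Icc hbq hpa).trans (hJ b hb a ha)
  obtain ⟨GU, GV, hGU, hGV, hA'GU, hB'GV, J', hJ'⟩ :=
    hgen.exists_open_Icc_subset hR K hKR hO hA' hB' hB'A'
  have hxGU : x ∈ GU := hA'GU ⟨⟨x, Or.inr rfl, le_rfl⟩, hxL⟩
  have hxGV : x ∈ GV := hB'GV ⟨⟨x, Or.inr rfl, le_rfl⟩, hxL⟩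
  refine ⟨GU ∩ interior L, GV ∩ interior L, hGU.inter isOpen_interior,
    hGV.inter isOpen_interior, inter_subset_right.trans interior_subset,
    inter_subset_right.trans interior_subset, ⟨J', fun q hq p hp => hJ' q ?_ p ?_⟩, ?_, ?_⟩
  · rcases hq with hq | rfl
    exacts [closure_mono inter_subset_left hq, subset_closure hxGV]
  · rcases hp with hp | rfl
    exacts [closure_mono inter_subset_left hp, subset_closure hxGU]
  · rintro z ⟨⟨p, hp, hzp⟩, hz⟩
    exact ⟨hA'GU ⟨⟨p, hp.imp_left fun h => subset_closure h, hzp⟩, interior_subset hz⟩, hz⟩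
  · rintro z ⟨⟨p, hp, hpz⟩, hz⟩
    exact ⟨hB'GV ⟨⟨p, hp.imp_left fun h => subset_closure h, hpz⟩, interior_subset hz⟩, hz⟩

theorem GeneratesClosedOrder.exists_open_decHull_incHull_inter_subset
    (hanti : ∀ a b : E, a ≤ b → b ≤ a → a = b) (hgen : GeneratesClosedOrder R)
    (hR : ∀ p ∈ R, p.1 ≤ p.2) (K : CompactExhaustion E)
    (hKR : ∀ n, relImage R (K n) ⊆ interior (K (n + 1))) {x : E} (hx : x ∈ K 0) {O : Set E}
    (hO : IsOpen O) (hxO : x ∈ O) :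
    ∃ U V, IsOpen U ∧ decHull U = U ∧ IsOpen V ∧ incHull V = V ∧ x ∈ U ∩ V ∧ U ∩ V ⊆ O := by
  have h₀ : ∀ q ∈ closure ∅ ∪ {x}, ∀ p ∈ closure ∅ ∪ {x}, Icc q p ⊆ K 0 ∩ O := by
    rintro q hq p hp w ⟨hqw, hwp⟩
    rw [closure_empty, empty_union, mem_singleton_iff] at hq hp
    subst hq hp
    rw [hanti w p hwp hqw]
    exact ⟨hx, hxO⟩
  obtain ⟨U, V, hU, hUd, hV, hVi, hxU, hxV, hUV⟩ :=
    exists_open_decHull_incHull_of_step K (A := {x}) (B := {x}) (O := O)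
      (fun U V => ∃ J, ∀ q ∈ closure V ∪ {x}, ∀ p ∈ closure U ∪ {x}, Icc q p ⊆ K J ∩ O)
      ⟨0, h₀⟩
      (fun U V ⟨J, hJ⟩ z hz => (hJ z (Or.inl (subset_closure hz.2)) z
        (Or.inl (subset_closure hz.1)) ⟨le_rfl, le_rfl⟩).2)
      fun n U V hUK hVK hUV => hgen.exists_convex_step hR K hKR hO hx n hUK hVK hUV
  exact ⟨U, V, hU, hUd, hV, hVi, ⟨hxU rfl, hxV rfl⟩, hUV⟩

end ClosedPreorder

/-- Every compactly generated closed ordered space whose topology is locally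
compact and σ-compact is convex and normally ordered. -/
theorem convex_normallyOrdered_of_compactlyGenerated {E : Type*} [TopologicalSpace E]
    [Preorder E]
    (hG : IsClosed {p : E × E | p.1 ≤ p.2})
    (hanti : ∀ a b : E, a ≤ b → b ≤ a → a = b)
    (hcg : ∃ R : Set (E × E), R ⊆ {p : E × E | p.1 ≤ p.2} ∧
      (∀ K : Set E, IsCompact K → IsCompact (closure (relImage R K))) ∧
      (∀ T : Set (E × E), IsClosed T → (∀ a : E, (a, a) ∈ T) →
        (∀ a b c : E, (a, b) ∈ T → (b, c) ∈ T → (a, c) ∈ T) → R ⊆ T →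
        {p : E × E | p.1 ≤ p.2} ⊆ T))
    (hloc : ∀ x : E, ∃ K : Set E, IsCompact K ∧ K ∈ 𝓝 x)
    (hsigma : ∃ K : ℕ → Set E, (∀ n, IsCompact (K n)) ∧ (⋃ n, K n) = Set.univ) :
    (∀ x : E, ∀ O : Set E, IsOpen O → x ∈ O →
      ∃ U V : Set E, IsOpen U ∧ decHull U = U ∧ IsOpen V ∧ incHull V = V ∧
        x ∈ U ∩ V ∧ U ∩ V ⊆ O) ∧
    (∀ x : E, IsClosed (incHull {x}) ∧ IsClosed (decHull {x})) ∧
    (∀ A B : Set E, IsClosed A → decHull A = A → IsClosed B → incHull B = B →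
      A ∩ B = ∅ →
      ∃ U V : Set E, IsOpen U ∧ decHull U = U ∧ IsOpen V ∧ incHull V = V ∧
        A ⊆ U ∧ B ⊆ V ∧ U ∩ V = ∅) := by
  obtain ⟨R, hR, hRK, hgen⟩ := hcg
  have : OrderClosedTopology E := ⟨hG⟩
  have : T2Space E := t2Space_of_antisymm hanti
  have : WeaklyLocallyCompactSpace E := ⟨hloc⟩
  have : SigmaCompactSpace E := ⟨hsigma⟩
  refine ⟨fun x O hO hxO => ?_, fun x => ⟨isClosed_incHull_of_isCompact isCompact_singleton,
    isClosed_decHull_of_isCompact isCompact_singleton⟩, fun A B hA hAd hB hBi hAB =>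
    exists_open_decHull_incHull_disjoint (CompactExhaustion.choice E) hA hAd.subset hB
      hBi.subset hAB⟩
  obtain ⟨K, hxK, hKR⟩ := exists_compactExhaustion_relImage_subset hRK isCompact_singleton
  exact GeneratesClosedOrder.exists_open_decHull_incHull_inter_subset hanti hgen hR K hKR
    (hxK rfl) hO hxO
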